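/- arXiv:2410.00694 — 5 statements merged into one kernel-verified Lean document; each statement's English description precedes it below -/
import Mathlib

section
/- Let s ≥ 2 be an integer and for each n ≥ 1 let (d_{0n}, ..., d_{(s-1)n}) be a tuple of integers forming a complete residue system modulo s, with |d_{jn}| ≤ L for all j, n. Then the set M = { Σ_{n=1}^∞ x_n / s^n : x_n ∈ {d_{0n}, ..., d_{(s-1)n}} for all n } has positive Lebesgue measure. -/
open MeasureTheory Set
open scoped Pointwise

/-!
Every partial sum `∑_{n<N} d_{j_n,n+1} / s^(n+1)` lies in `s^(-N) ℤ`, and since each column of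
digits is a complete residue system, choosing the digits from the last one backwards reaches every
class of `s^(-N) ℤ` modulo `ℤ`. The tail after `N` digits is `O(s^(-N))`, so `M + ℤ` is dense; it is
also closed, `M` being compact. Hence `M + ℤ = ℝ`, and a set whose countably many translates cover
`ℝ` cannot be null.
-/

theorem pos_measure_of_add_eq_univ {G : Type*} [AddGroup G] [MeasurableSpace G] [MeasurableAdd G]
    (μ : Measure G) [μ.IsAddRightInvariant] [NeZero μ] {S T : Set G} (hT : T.Countable)
    (h : S + T = univ) : 0 < μ S := by
  refine pos_iff_ne_zero.2 fun hS => NeZero.ne μ (Measure.measure_univ_eq_zero.1 ?_)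
  rw [← h, ← iUnion_add_right_image]
  refine (measure_biUnion_null_iff hT).2 fun t _ => ?_
  rw [image_add_right, measure_preimage_add_right, hS]

section GeometricTail

variable {b L : ℝ} {a : ℕ → ℝ}

theorem abs_div_pow_succ_le (hb : 1 < b) (ha : ∀ n, |a n| ≤ L) (n : ℕ) :
    |a n / b ^ (n + 1)| ≤ L / b * (1 / b) ^ n := by
  have hb0 : 0 < b := by linarith
  rw [abs_div, abs_of_pos (pow_pos hb0 _), div_le_iff₀ (pow_pos hb0 _)]
  calc |a n| ≤ L := ha n
    _ = L / b * (1 / b) ^ n * b ^ (n + 1) := by rw [one_div_pow, pow_succ]; field_simp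

theorem summable_div_pow_succ (hb : 1 < b) (ha : ∀ n, |a n| ≤ L) :
    Summable fun n => a n / b ^ (n + 1) :=
  .of_norm_bounded ((summable_geometric_of_lt_one (by positivity)
    ((div_lt_one (by linarith)).2 hb)).mul_left _) (abs_div_pow_succ_le hb ha)

theorem abs_tsum_div_pow_succ_sub_sum_le (hb : 1 < b) (ha : ∀ n, |a n| ≤ L) (N : ℕ) :
    |∑' n, a n / b ^ (n + 1) - ∑ n ∈ Finset.range N, a n / b ^ (n + 1)| ≤
      L / ((b - 1) * b ^ N) := by
  have hb0 : 0 < b := by linarith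
  have h := dist_le_of_le_geometric_of_tendsto (r := 1 / b) (C := L / b)
    ((div_lt_one hb0).2 hb) (fun n => ?_)
    (summable_div_pow_succ hb ha).hasSum.tendsto_sum_nat N
  · rw [dist_comm, Real.dist_eq] at h
    convert h using 1
    rw [one_div_pow]
    field_simp
  · rw [Real.dist_eq, abs_sub_comm, Finset.sum_range_succ, add_sub_cancel_left]
    exact abs_div_pow_succ_le hb ha n

end GeometricTail

section DigitExpansion

variable {ι : Type*} {s : ℕ} {L : ℝ} {d : ι → ℕ → ℤ}

theorem exists_sum_range_div_pow_eq_intCast_div_add (hs : s ≠ 0)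
    (hd : ∀ n, Function.Surjective fun i => (d i n : ZMod s)) (N : ℕ) (r : ℤ) :
    ∃ (j : ℕ → ι) (m : ℤ),
      ∑ n ∈ Finset.range N, (d (j n) (n + 1) : ℝ) / (s : ℝ) ^ (n + 1) = r / (s : ℝ) ^ N + m := by
  induction N generalizing r with
  | zero =>
    obtain ⟨i, -⟩ := hd 0 0
    exact ⟨fun _ => i, -r, by simp⟩
  | succ N ih =>
    obtain ⟨i, hi⟩ := hd (N + 1) r
    obtain ⟨r', hr'⟩ := (ZMod.intCast_eq_intCast_iff_dvd_sub _ _ _).1 hi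
    obtain ⟨j, m, hj⟩ := ih r'
    refine ⟨Function.update j N i, m, ?_⟩
    have hs' : (s : ℝ) ≠ 0 := Nat.cast_ne_zero.2 hs
    have hr : (r : ℝ) = d i (N + 1) + s * r' := by
      rw [← sub_eq_iff_eq_add']; exact_mod_cast hr'
    rw [Finset.sum_range_succ, Function.update_self,
      Finset.sum_congr rfl fun n hn => by
        rw [Function.update_of_ne (Finset.mem_range.1 hn).ne], hj, hr]
    field_simp
    ring

noncomputable def digitExpansion (s : ℕ) (d : ι → ℕ → ℤ) (j : ℕ → ι) : ℝ :=
  ∑' n, (d (j n) (n + 1) : ℝ) / (s : ℝ) ^ (n + 1)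

theorem hasSum_digitExpansion (hs : 1 < s) (hd : ∀ i n, |(d i n : ℝ)| ≤ L) (j : ℕ → ι) :
    HasSum (fun n => (d (j n) (n + 1) : ℝ) / (s : ℝ) ^ (n + 1)) (digitExpansion s d j) :=
  (summable_div_pow_succ (Nat.one_lt_cast.2 hs) fun n => hd (j n) (n + 1)).hasSum

theorem isCompact_range_digitExpansion [TopologicalSpace ι] [DiscreteTopology ι] [Finite ι]
    (hs : 1 < s) (hd : ∀ i n, |(d i n : ℝ)| ≤ L) : IsCompact (range (digitExpansion s d)) := by
  have hs1 : (1 : ℝ) < s := Nat.one_lt_cast.2 hs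
  refine isCompact_range (continuous_tsum (fun n => ?_) ?_ fun n j =>
    abs_div_pow_succ_le hs1 (fun n => hd (j n) (n + 1)) n)
  · exact (continuous_of_discreteTopology
      (f := fun i => (d i (n + 1) : ℝ) / (s : ℝ) ^ (n + 1))).comp (continuous_apply n)
  · exact (summable_geometric_of_lt_one (by positivity)
      ((div_lt_one (by positivity)).2 hs1)).mul_left _

theorem dense_range_digitExpansion_add_range_intCast (hs : 1 < s)
    (hd : ∀ i n, |(d i n : ℝ)| ≤ L) (hres : ∀ n, Function.Surjective fun i => (d i n : ZMod s)) :
    Dense (range (digitExpansion s d) + range ((↑) : ℤ → ℝ)) := by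
  have hs1 : (1 : ℝ) < s := Nat.one_lt_cast.2 hs
  have hs0 : (0 : ℝ) < s := by linarith
  set C := 1 + L / (s - 1)
  refine Metric.dense_iff.2 fun t ε hε => ?_
  obtain ⟨N, hN⟩ := pow_unbounded_of_one_lt (C / ε) hs1
  have hsN : (0 : ℝ) < (s : ℝ) ^ N := pow_pos hs0 N
  obtain ⟨j, m, hjm⟩ :=
    exists_sum_range_div_pow_eq_intCast_div_add (by omega) hres N ⌊t * (s : ℝ) ^ N⌋
  refine ⟨digitExpansion s d j + ((-m : ℤ) : ℝ), ?_,
    add_mem_add (mem_range_self j) (mem_range_self _)⟩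
  set q : ℝ := ⌊t * (s : ℝ) ^ N⌋ / (s : ℝ) ^ N
  have hfloor : |t - q| ≤ 1 / (s : ℝ) ^ N := by
    have h : t - q = Int.fract (t * (s : ℝ) ^ N) / (s : ℝ) ^ N := by
      rw [Int.fract, sub_div, mul_div_cancel_right₀ _ hsN.ne']
    rw [h, abs_of_nonneg (by positivity)]
    exact div_le_div_of_nonneg_right (Int.fract_lt_one _).le hsN.le
  have htail := abs_tsum_div_pow_succ_sub_sum_le hs1 (fun n => hd (j n) (n + 1)) N
  rw [hjm] at htail
  rw [Metric.mem_ball, Real.dist_eq]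
  calc |digitExpansion s d j + ((-m : ℤ) : ℝ) - t|
      = |(digitExpansion s d j - (q + m)) + -(t - q)| := by congr 1; push_cast; ring
    _ ≤ L / ((s - 1) * (s : ℝ) ^ N) + 1 / (s : ℝ) ^ N :=
        (abs_add_le _ _).trans (add_le_add htail ((abs_neg _).trans_le hfloor))
    _ = C / (s : ℝ) ^ N := by field_simp; ring
    _ < ε := by rw [div_lt_iff₀ hsN]; rwa [div_lt_iff₀ hε, mul_comm] at hN

theorem range_digitExpansion_add_range_intCast [Finite ι] (hs : 1 < s)
    (hd : ∀ i n, |(d i n : ℝ)| ≤ L) (hres : ∀ n, Function.Surjective fun i => (d i n : ZMod s)) :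
    range (digitExpansion s d) + range ((↑) : ℤ → ℝ) = univ := by
  let _ : TopologicalSpace ι := ⊥
  have _ : DiscreteTopology ι := ⟨rfl⟩
  rw [← (Real.isClosed_range_intCast.add_left_of_isCompact
    (isCompact_range_digitExpansion hs hd)).closure_eq,
    (dense_range_digitExpansion_add_range_intCast hs hd hres).closure_eq]

end DigitExpansion

theorem stmt0_general (s : ℕ) (hs : 2 ≤ s) (L : ℝ)
    (d : Fin s → ℕ → ℤ)
    (hres : ∀ n : ℕ, Function.Bijective (fun j : Fin s => (d j n : ZMod s)))
    (hbd : ∀ (j : Fin s) (n : ℕ), |(d j n : ℝ)| ≤ L)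
    (M : Set ℝ)
    (hM : M = {x : ℝ | ∃ j : ℕ → Fin s,
      HasSum (fun n : ℕ => (d (j n) (n + 1) : ℝ) / (s : ℝ) ^ (n + 1)) x}) :
    0 < volume M := by
  have hs1 : 1 < s := by omega
  have hM_eq : M = range (digitExpansion s d) := by
    rw [hM]
    ext x
    exact ⟨fun ⟨j, hj⟩ => ⟨j, (hasSum_digitExpansion hs1 hbd j).unique hj⟩,
      fun ⟨j, hj⟩ => ⟨j, hj ▸ hasSum_digitExpansion hs1 hbd j⟩⟩
  rw [hM_eq]
  exact pos_measure_of_add_eq_univ volume (countable_range _)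
    (range_digitExpansion_add_range_intCast hs1 hbd fun n => (hres n).surjective)

/-- Kenyon-Nitecki type result: if each column of `d` is a complete residue system
mod `s` and entries are bounded by `L`, the set of subsums has positive Lebesgue measure. -/
theorem stmt0 (s : ℕ) (hs : 2 ≤ s) (L : ℝ) (hL : 0 < L)
    (d : Fin s → ℕ → ℤ)
    (hres : ∀ n : ℕ, Function.Bijective (fun j : Fin s => (d j n : ZMod s)))
    (hbd : ∀ (j : Fin s) (n : ℕ), |(d j n : ℝ)| ≤ L)
    (M : Set ℝ)
    (hM : M = {x : ℝ | ∃ j : ℕ → Fin s,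
      HasSum (fun n : ℕ => (d (j n) (n + 1) : ℝ) / (s : ℝ) ^ (n + 1)) x}) :
    0 < volume M :=
  stmt0_general s hs L d hres hbd M hM
end

section
/- Key induction step: with the setup above (uniform probabilities 1/s and complete residue systems mod s), for every integer r and every n there is at most one j ∈ {0,...,s-1} with d_{j(n+1)} ≡ r (mod s), and consequently S(r, n+1) ≤ (1/s) · max over r' of S(r', n). -/
/-!
With uniform weights, `S(r, n)` is the number of digit choices `j` whose value is `r`, divided
by `s ^ n`. By Horner, the value of an `(n+1)`-digit choice is `s` times the value of its first
`n` digits plus its last digit, so the last digit is congruent to `r` mod `s`; as the digits of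
column `n+1` are pairwise incongruent, it is forced. Dropping it then maps the choices of value
`r` injectively to the `n`-digit choices of value `(r - d) / s`.
-/

open Finset

theorem Fin.sum_mul_pow_sub_succ {R : Type*} [CommSemiring R] (b : R) (n : ℕ)
    (x : Fin (n + 1) → R) :
    ∑ k : Fin (n + 1), x k * b ^ (n + 1 - (k.1 + 1)) =
      b * ∑ k : Fin n, x k.castSucc * b ^ (n - (k.1 + 1)) + x (Fin.last n) := by
  rw [Fin.sum_univ_castSucc, Finset.mul_sum]
  congr 1
  · refine Finset.sum_congr rfl fun k _ => ?_
    rw [Fin.val_castSucc, show n + 1 - (k.1 + 1) = n - (k.1 + 1) + 1 by omega, pow_succ]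
    ring
  · simp

section DigitValue

variable {s : ℕ} (d : Fin s → ℕ → ℤ)

def digitValue (n : ℕ) (j : Fin n → Fin s) : ℤ :=
  ∑ k : Fin n, d (j k) (k.1 + 1) * (s : ℤ) ^ (n - (k.1 + 1))

theorem digitValue_succ (n : ℕ) (j : Fin (n + 1) → Fin s) :
    digitValue d (n + 1) j = s * digitValue d n (Fin.init j) + d (j (Fin.last n)) (n + 1) :=
  Fin.sum_mul_pow_sub_succ _ n fun k => d (j k) (k.1 + 1)

theorem intCast_digitValue_succ (n : ℕ) (j : Fin (n + 1) → Fin s) :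
    (digitValue d (n + 1) j : ZMod s) = d (j (Fin.last n)) (n + 1) := by
  simp [digitValue_succ]

theorem last_eq_of_digitValue_eq {n : ℕ}
    (hinj : Function.Injective fun a : Fin s => (d a (n + 1) : ZMod s))
    {j j' : Fin (n + 1) → Fin s} (h : digitValue d (n + 1) j = digitValue d (n + 1) j') :
    j (Fin.last n) = j' (Fin.last n) :=
  hinj <| by simpa only [intCast_digitValue_succ] using congrArg (Int.cast : ℤ → ZMod s) h

theorem exists_card_digitValue_succ_le {n : ℕ}
    (hinj : Function.Injective fun a : Fin s => (d a (n + 1) : ZMod s)) (r : ℤ) :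
    ∃ r', #{j | digitValue d (n + 1) j = r} ≤ #{g | digitValue d n g = r'} := by
  obtain h | ⟨j₀, hj₀⟩ := Finset.eq_empty_or_nonempty {j | digitValue d (n + 1) j = r}
  · exact ⟨0, by simp [h]⟩
  have hs : (s : ℤ) ≠ 0 := by exact_mod_cast (j₀ (Fin.last n)).pos.ne'
  rw [mem_filter_univ] at hj₀
  have hlast : ∀ j, digitValue d (n + 1) j = r → j (Fin.last n) = j₀ (Fin.last n) :=
    fun j hj => last_eq_of_digitValue_eq d hinj (hj.trans hj₀.symm)
  refine ⟨(r - d (j₀ (Fin.last n)) (n + 1)) / s,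
    card_le_card_of_injOn Fin.init (fun j hj => ?_) fun j hj j' hj' hinit => ?_⟩
  · simp only [coe_filter, mem_univ, true_and, Set.mem_ofPred_eq] at hj ⊢
    rw [← hlast j hj, ← hj, digitValue_succ, add_sub_cancel_right,
      Int.mul_ediv_cancel_left _ hs]
  · simp only [coe_filter, mem_univ, true_and, Set.mem_ofPred_eq] at hj hj'
    rw [← Fin.snoc_init_self j, ← Fin.snoc_init_self j', hinit, hlast j hj, hlast j' hj']

end DigitValue

theorem stmt2_general (s : ℕ) (d : Fin s → ℕ → ℤ)
    (hres : ∀ n : ℕ, Function.Bijective (fun j : Fin s => (d j n : ZMod s)))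
    (p : Fin s → ℕ → ℝ) (hp : ∀ (j : Fin s) (n : ℕ), p j n = 1 / s)
    (S : ℤ → ℕ → ℝ)
    (hS : ∀ (r : ℤ) (n : ℕ), S r n =
      ∑ j : Fin n → Fin s,
        if (∑ k : Fin n, d (j k) (k.1 + 1) * (s : ℤ) ^ (n - (k.1 + 1))) = r
        then ∏ k : Fin n, p (j k) (k.1 + 1) else 0) :
    ∀ (r : ℤ) (n : ℕ),
      {j : Fin s | (d j (n + 1) : ZMod s) = (r : ZMod s)}.Subsingleton ∧
      S r (n + 1) ≤ (1 / s) * ⨆ r' : ℤ, S r' n := by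
  have hS_card : ∀ r n, S r n = #{j | digitValue d n j = r} / (s : ℝ) ^ n := by
    intro r n
    rw [hS, Finset.sum_ite, sum_const_zero, add_zero]
    simp only [hp, prod_const, card_univ, Fintype.card_fin, sum_const, nsmul_eq_mul, div_pow,
      one_pow, mul_one_div]
    rfl
  intro r n
  have hinj := (hres (n + 1)).injective
  refine ⟨fun a ha b hb => hinj (ha.trans hb.symm), ?_⟩
  have hbdd : BddAbove (Set.range fun r' => S r' n) :=
    ⟨(s : ℝ) ^ n / s ^ n, Set.forall_mem_range.2 fun r' => by
      rw [hS_card]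
      gcongr
      exact_mod_cast (card_le_univ _).trans_eq (by simp)⟩
  obtain ⟨r', hr'⟩ := exists_card_digitValue_succ_le d hinj r
  calc S r (n + 1) = #{j | digitValue d (n + 1) j = r} / (s : ℝ) ^ (n + 1) := hS_card r _
    _ ≤ #{g | digitValue d n g = r'} / (s : ℝ) ^ (n + 1) := by gcongr
    _ = 1 / s * S r' n := by rw [hS_card, pow_succ']; ring
    _ ≤ 1 / s * ⨆ r' : ℤ, S r' n := by gcongr; exact le_ciSup hbdd r'

/-- Key induction step: for each `r` there is at most one `j` with
`d j (n+1) ≡ r (mod s)`, and hence `S(r, n+1) ≤ (1/s) * sup_{r'} S(r', n)`. -/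
theorem stmt2 (s : ℕ) (hs : 2 ≤ s) (d : Fin s → ℕ → ℤ)
    (hres : ∀ n : ℕ, Function.Bijective (fun j : Fin s => (d j n : ZMod s)))
    (p : Fin s → ℕ → ℝ) (hp : ∀ (j : Fin s) (n : ℕ), p j n = 1 / s)
    (S : ℤ → ℕ → ℝ)
    (hS : ∀ (r : ℤ) (n : ℕ), S r n =
      ∑ j : Fin n → Fin s,
        if (∑ k : Fin n, d (j k) (k.1 + 1) * (s : ℤ) ^ (n - (k.1 + 1))) = r
        then ∏ k : Fin n, p (j k) (k.1 + 1) else 0) :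
    ∀ (r : ℤ) (n : ℕ),
      {j : Fin s | (d j (n + 1) : ZMod s) = (r : ZMod s)}.Subsingleton ∧
      S r (n + 1) ≤ (1 / s) * ⨆ r' : ℤ, S r' n :=
  stmt2_general s d hres p hp S hS
end

section
/- Let (ψ_k) be independent random variables where ψ_k takes values in a finite set of size s with maximum probability m_k = max_j p_{jk}. If Π_{k=1}^∞ m_k > 0, then the distribution of ψ = Σ_{k=1}^∞ ψ_k γ^k (with 0 < γ < 1 and the values of each ψ_k uniformly bounded) has an atom, i.e., the distribution is not continuous. -/
/-! Let `j k` be a most likely value index of `ψ_k`. By independence and continuity from above,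
the event that every `ψ_k` takes its most likely value has probability `∏ m_k > 0`, and on that
event `ψ` equals the fixed number `∑ d_{j k, k} γ^(k+1)`. -/

open MeasureTheory ProbabilityTheory Filter Topology Finset

theorem ProbabilityTheory.iIndepFun.tendsto_prod_measure_preimage {Ω : Type*} {β : ℕ → Type*}
    [MeasurableSpace Ω] [∀ k, MeasurableSpace (β k)] {μ : Measure Ω} {f : ∀ k, Ω → β k}
    (hf : ∀ k, Measurable (f k)) (hind : iIndepFun f μ) {B : ∀ k, Set (β k)}
    (hB : ∀ k, MeasurableSet (B k)) :
    Tendsto (fun N => ∏ k ∈ range N, μ (f k ⁻¹' B k)) atTop (𝓝 (μ (⋂ k, f k ⁻¹' B k))) := by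
  have := hind.isProbabilityMeasure
  have hpartial : ∀ N, μ (⋂ k ∈ range N, f k ⁻¹' B k) = ∏ k ∈ range N, μ (f k ⁻¹' B k) :=
    fun N => hind.meas_biInter fun k _ => ⟨B k, hB k, rfl⟩
  simp_rw [← hpartial]
  rw [← tendsto_add_atTop_iff_nat 1]
  simpa [Nat.lt_succ_iff] using
    tendsto_measure_iInter_le (fun k => (hf k (hB k)).nullMeasurableSet) ⟨0, measure_ne_top μ _⟩

theorem stmt5_general {Ω : Type*} [MeasureSpace Ω]
    (γ : ℝ) (s : ℕ) (hs : 2 ≤ s)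
    (d : Fin s → ℕ → ℝ)
    (p : Fin s → ℕ → ℝ) (hp0 : ∀ j k, 0 ≤ p j k)
    (ψk : ℕ → Ω → ℝ) (hmeas : ∀ k, Measurable (ψk k))
    (hindep : iIndepFun ψk (ℙ : Measure Ω))
    (hval : ∀ (j : Fin s) (k : ℕ),
      (ℙ : Measure Ω) {ω | ψk k ω = d j k} = ENNReal.ofReal (p j k))
    (m : ℕ → ℝ) (hm : ∀ k, m k = ⨆ j : Fin s, p j k)
    (c : ℝ) (hc : 0 < c)
    (hW : Filter.Tendsto (fun N : ℕ => ∏ k ∈ Finset.range N, m k)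
      Filter.atTop (nhds c))
    (ψ : Ω → ℝ) (hψ : ∀ ω, ψ ω = ∑' k : ℕ, ψk k ω * γ ^ (k + 1)) :
    ∃ x : ℝ, 0 < (ℙ : Measure Ω) {ω | ψ ω = x} := by
  have : Nonempty (Fin s) := ⟨⟨0, by omega⟩⟩
  choose j hj using fun k => exists_eq_ciSup_of_finite (f := fun j : Fin s => p j k)
  have hmj : ∀ k, m k = p (j k) k := fun k => (hm k).trans (hj k).symm
  have hmode : ∀ k, ℙ (ψk k ⁻¹' {d (j k) k}) = ENNReal.ofReal (m k) := fun k => by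
    rw [hmj]
    exact hval _ _
  have hprod : Tendsto (fun N => ∏ k ∈ range N, ℙ (ψk k ⁻¹' {d (j k) k})) atTop
      (𝓝 (ENNReal.ofReal c)) := by
    simp_rw [hmode, ← ENNReal.ofReal_prod_of_nonneg fun k _ => hmj k ▸ hp0 _ _]
    exact (ENNReal.continuous_ofReal.tendsto c).comp hW
  refine ⟨∑' k, d (j k) k * γ ^ (k + 1), ?_⟩
  calc 0 < ENNReal.ofReal c := ENNReal.ofReal_pos.2 hc
    _ = ℙ (⋂ k, ψk k ⁻¹' {d (j k) k}) := tendsto_nhds_unique hprod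
        (hindep.tendsto_prod_measure_preimage hmeas fun _ => measurableSet_singleton _)
    _ ≤ _ := measure_mono fun ω hω => by
        simp only [Set.mem_iInter, Set.mem_preimage, Set.mem_singleton_iff] at hω
        simp [hψ, hω]

/-- Levy-type criterion: if the product of maximal probabilities is positive, then
the distribution of `ψ = Σ ψ_k γ^k` has an atom. -/
theorem stmt5 {Ω : Type*} [MeasureSpace Ω] [IsProbabilityMeasure (ℙ : Measure Ω)]
    (γ : ℝ) (hγ : γ ∈ Set.Ioo (0 : ℝ) 1) (s : ℕ) (hs : 2 ≤ s) (L : ℝ) (hL : 0 < L)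
    (d : Fin s → ℕ → ℝ) (hbd : ∀ (j : Fin s) (k : ℕ), |d j k| ≤ L)
    (p : Fin s → ℕ → ℝ) (hp0 : ∀ j k, 0 ≤ p j k) (hp1 : ∀ k, ∑ j : Fin s, p j k = 1)
    (ψk : ℕ → Ω → ℝ) (hmeas : ∀ k, Measurable (ψk k))
    (hindep : iIndepFun ψk (ℙ : Measure Ω))
    (hval : ∀ (j : Fin s) (k : ℕ),
      (ℙ : Measure Ω) {ω | ψk k ω = d j k} = ENNReal.ofReal (p j k))
    (hrange : ∀ (k : ℕ) (ω : Ω), ∃ j : Fin s, ψk k ω = d j k)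
    (m : ℕ → ℝ) (hm : ∀ k, m k = ⨆ j : Fin s, p j k)
    (c : ℝ) (hc : 0 < c)
    (hW : Filter.Tendsto (fun N : ℕ => ∏ k ∈ Finset.range N, m k)
      Filter.atTop (nhds c))
    (ψ : Ω → ℝ) (hψ : ∀ ω, ψ ω = ∑' k : ℕ, ψk k ω * γ ^ (k + 1)) :
    ∃ x : ℝ, 0 < (ℙ : Measure Ω) {ω | ψ ω = x} :=
  stmt5_general γ s hs d p hp0 ψk hmeas hindep hval m hm c hc hW ψ hψ
end

section
/- Kakutani dichotomy consequence: let (Ω_k, A_k) be finite measurable spaces of size s with two product measures μ = ⊗μ_k and ν = ⊗ν_k, where ν_k is uniform (each point has mass 1/s) and μ_k assigns mass p_{jk} to the j-th point. If Π_{k=1}^∞ Σ_{j=0}^{s-1} √(p_{jk}/s) > 0, then μ is absolutely continuous with respect to ν. -/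
/-!
Let `a k = ∑ j, √(p j k / s)` be the Hellinger affinity of `μ_k` and the uniform law, and let
`ρ` be the law on the first `n` coordinates that follows `μ` up to time `m` and is uniform
afterwards. For a cylinder set `B` over the first `n` coordinates, the triangle inequality in `ℓ²`
applied to `√μ = √ρ + (√μ - √ρ)` gives `√μ(B) ≤ √(s^m ν(B)) + H`, where
`H² = 2 (1 - ∏_{m ≤ k < n} a k)` is the squared Hellinger distance between `μ` and `ρ`. Since
`∏ a k` converges to `c > 0`, the tail products tend to `1`, so `H` is small uniformly in `n` once
`m` is large. Hence `μ` is uniformly absolutely continuous with respect to `ν` on cylinder sets,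
and since these approximate every measurable set in measure `μ + ν`, `μ ≪ ν`.
-/

open Finset Filter Topology MeasureTheory
open scoped ENNReal symmDiff

theorem sqrt_sum_le_sqrt_sum_add_sqrt_sum_sq_sub {ι : Type*} (S : Finset ι) {f g : ι → ℝ}
    (hf : ∀ i ∈ S, 0 ≤ f i) (hg : ∀ i ∈ S, 0 ≤ g i) :
    √(∑ i ∈ S, f i) ≤ √(∑ i ∈ S, g i) + √(∑ i ∈ S, (√(f i) - √(g i)) ^ 2) := by
  have h := Real.Lp_add_le S (fun i => √(g i)) (fun i => √(f i) - √(g i)) one_le_two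
  simp only [add_sub_cancel, Real.rpow_two, sq_abs, ← Real.sqrt_eq_rpow] at h
  rwa [sum_congr rfl fun i hi => Real.sq_sqrt (hf i hi),
    sum_congr rfl fun i hi => Real.sq_sqrt (hg i hi)] at h

theorem sum_sq_sqrt_sub_sqrt {ι : Type*} (S : Finset ι) {f g : ι → ℝ}
    (hf : ∀ i ∈ S, 0 ≤ f i) (hg : ∀ i ∈ S, 0 ≤ g i)
    (hf1 : ∑ i ∈ S, f i = 1) (hg1 : ∑ i ∈ S, g i = 1) :
    ∑ i ∈ S, (√(f i) - √(g i)) ^ 2 = 2 * (1 - ∑ i ∈ S, √(f i * g i)) := by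
  have hterm : ∀ i ∈ S, (√(f i) - √(g i)) ^ 2 = f i + g i - 2 * √(f i * g i) := fun i hi => by
    rw [sub_sq, Real.sq_sqrt (hf i hi), Real.sq_sqrt (hg i hi), Real.sqrt_mul (hf i hi)]; ring
  rw [sum_congr rfl hterm, sum_sub_distrib, sum_add_distrib, ← mul_sum, hf1, hg1]
  ring

theorem sum_sqrt_mul_le_one {ι : Type*} (S : Finset ι) {f g : ι → ℝ}
    (hf : ∀ i ∈ S, 0 ≤ f i) (hg : ∀ i ∈ S, 0 ≤ g i)
    (hf1 : ∑ i ∈ S, f i = 1) (hg1 : ∑ i ∈ S, g i = 1) :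
    ∑ i ∈ S, √(f i * g i) ≤ 1 := by
  have := sum_sq_sqrt_sub_sqrt S hf hg hf1 hg1 ▸ sum_nonneg fun i _ => sq_nonneg (√(f i) - √(g i))
  linarith

theorem sum_sqrt_prod_mul_prod {ι : Type*} [Fintype ι] [DecidableEq ι] {β : ι → Type*}
    [∀ i, Fintype (β i)] {f g : ∀ i, β i → ℝ} (hf : ∀ i j, 0 ≤ f i j) (hg : ∀ i j, 0 ≤ g i j) :
    ∑ y : ∀ i, β i, √((∏ i, f i (y i)) * ∏ i, g i (y i)) = ∏ i, ∑ j, √(f i j * g i j) := by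
  rw [Fintype.prod_sum]
  refine sum_congr rfl fun y _ => ?_
  rw [← prod_mul_distrib, Real.sqrt_prod _ fun i _ => mul_nonneg (hf i _) (hg i _)]

theorem sum_prod_eq_one {ι : Type*} [Fintype ι] [DecidableEq ι] {β : ι → Type*}
    [∀ i, Fintype (β i)] {f : ∀ i, β i → ℝ} (hf : ∀ i, ∑ j, f i j = 1) :
    ∑ y : ∀ i, β i, ∏ i, f i (y i) = 1 := by
  rw [← Fintype.prod_sum, prod_congr rfl fun i _ => hf i, prod_const_one]

theorem prod_fin_ite_lt_eq_prod_Ico {M : Type*} [CommMonoid M] (f : ℕ → M) {m n : ℕ}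
    (hmn : m ≤ n) : ∏ i : Fin n, (if (i : ℕ) < m then 1 else f i) = ∏ k ∈ Ico m n, f k := by
  rw [Fin.prod_univ_eq_prod_range (fun k => if k < m then 1 else f k),
    ← prod_range_mul_prod_Ico _ hmn, prod_eq_one fun k hk => if_pos (mem_range.1 hk), one_mul]
  exact prod_congr rfl fun k hk => if_neg (mem_Ico.1 hk).1.not_gt

theorem exists_forall_one_sub_le_prod_Ico {a : ℕ → ℝ} (ha0 : ∀ k, 0 ≤ a k) (ha1 : ∀ k, a k ≤ 1)
    {c : ℝ} (hc : 0 < c) (ha : Tendsto (fun N => ∏ k ∈ range N, a k) atTop (𝓝 c))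
    {ε : ℝ} (hε : 0 < ε) : ∃ m, ∀ n ≥ m, 1 - ε ≤ ∏ k ∈ Ico m n, a k := by
  have hanti : Antitone fun N => ∏ k ∈ range N, a k := antitone_nat_of_succ_le fun N => by
    rw [prod_range_succ]
    exact mul_le_of_le_one_right (prod_nonneg fun k _ => ha0 k) (ha1 N)
  have hc_le : ∀ N, c ≤ ∏ k ∈ range N, a k := hanti.le_of_tendsto ha
  have hratio : Tendsto (fun N => c / ∏ k ∈ range N, a k) atTop (𝓝 1) := by
    rw [← div_self hc.ne']
    exact tendsto_const_nhds.div ha hc.ne'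
  obtain ⟨m, hm⟩ := eventually_atTop.1 (hratio.eventually (Ici_mem_nhds (by linarith : 1 - ε < 1)))
  refine ⟨m, fun n hn => ?_⟩
  have hPm : 0 < ∏ k ∈ range m, a k := hc.trans_le (hc_le m)
  calc 1 - ε ≤ c / ∏ k ∈ range m, a k := hm m le_rfl
    _ ≤ (∏ k ∈ range n, a k) / ∏ k ∈ range m, a k := by gcongr; exact hc_le n
    _ = ∏ k ∈ Ico m n, a k := by rw [← prod_range_mul_prod_Ico a hn, mul_div_cancel_left₀ _ hPm.ne']

theorem MeasureTheory.Measure.absolutelyContinuous_of_isSetAlgebra {Ω : Type*}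
    [m : MeasurableSpace Ω] {C : Set (Set Ω)} (hC : IsSetAlgebra C)
    (hgen : m = MeasurableSpace.generateFrom C) (μ ν : Measure Ω)
    [IsFiniteMeasure μ] [IsFiniteMeasure ν]
    (h : ∀ η > 0, ∃ δ > 0, ∀ B ∈ C, ν.real B ≤ δ → μ.real B ≤ η) : μ ≪ ν := by
  refine Measure.AbsolutelyContinuous.mk fun A hA hνA => ?_
  suffices ∀ η > 0, μ.real A ≤ 2 * η by
    rw [← measureReal_eq_zero_iff]
    refine le_antisymm (le_of_forall_pos_le_add fun ε hε => ?_) measureReal_nonneg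
    linarith [this (ε / 2) (by positivity)]
  intro η hη
  obtain ⟨δ, hδ, hB⟩ := h η hη
  obtain ⟨B, hBC, hAB⟩ := (Measure.MeasureDense.of_generateFrom_isSetAlgebra_finite (μ + ν) hC
    hgen).approx A hA (measure_ne_top _ _) (min δ η) (by positivity)
  have hAB' : μ.real (A ∆ B) + ν.real (A ∆ B) < min δ η := by
    rw [← measureReal_add_apply]; exact ENNReal.toReal_lt_of_lt_ofReal hAB
  have hμA : μ.real A ≤ μ.real B + μ.real (A ∆ B) :=
    (measureReal_mono (le_symmDiff_sup_left B A)).trans (by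
      rw [symmDiff_comm]; exact (measureReal_union_le _ _).trans_eq (add_comm _ _))
  have hνB : ν.real B ≤ ν.real (A ∆ B) := by
    have := (measureReal_mono (μ := ν) (le_symmDiff_sup_left A B)).trans (measureReal_union_le _ _)
    rwa [measureReal_def ν A, hνA, ENNReal.toReal_zero, add_zero] at this
  have := hB B hBC (by linarith [min_le_left δ η, measureReal_nonneg (μ := μ) (s := A ∆ B)])
  linarith [min_le_right δ η, measureReal_nonneg (μ := ν) (s := A ∆ B)]

def restrictFin {α : Type*} (n : ℕ) (x : ℕ → α) : Fin n → α := fun i => x i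

def initialCylinders (α : Type*) : Set (Set (ℕ → α)) :=
  {B | ∃ (n : ℕ) (S : Set (Fin n → α)), B = restrictFin n ⁻¹' S}

section InitialCylinders

variable {α : Type*}

theorem exists_eq_preimage_restrictFin_of_le {B : Set (ℕ → α)} (hB : B ∈ initialCylinders α)
    (m : ℕ) : ∃ n, m ≤ n ∧ ∃ S : Set (Fin n → α), B = restrictFin n ⁻¹' S := by
  obtain ⟨n, S, rfl⟩ := hB
  exact ⟨max m n, le_max_left m n, (· ∘ Fin.castLE (le_max_right m n)) ⁻¹' S, rfl⟩

theorem isSetAlgebra_initialCylinders : IsSetAlgebra (initialCylinders α) where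
  empty_mem := ⟨0, ∅, rfl⟩
  compl_mem := by
    rintro _ ⟨n, S, rfl⟩
    exact ⟨n, Sᶜ, rfl⟩
  union_mem := by
    rintro B _ hB ⟨n, T, rfl⟩
    obtain ⟨n', hn', S, rfl⟩ := exists_eq_preimage_restrictFin_of_le hB n
    exact ⟨n', S ∪ (· ∘ Fin.castLE hn') ⁻¹' T, rfl⟩

variable [MeasurableSpace α]

theorem measurable_restrictFin (n : ℕ) : Measurable (restrictFin (α := α) n) :=
  measurable_pi_lambda _ fun i => measurable_pi_apply (i : ℕ)

theorem generateFrom_initialCylinders [MeasurableSingletonClass α] [Finite α] :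
    MeasurableSpace.pi = MeasurableSpace.generateFrom (initialCylinders α) := by
  refine le_antisymm ?_ (MeasurableSpace.generateFrom_le ?_)
  · rw [MeasurableSpace.pi_eq_generateFrom_projections]
    refine MeasurableSpace.generateFrom_mono ?_
    rintro _ ⟨k, A, -, rfl⟩
    exact ⟨k + 1, {y | y (Fin.last k) ∈ A}, rfl⟩
  · rintro _ ⟨n, S, rfl⟩
    exact measurable_restrictFin n MeasurableSet.of_discrete

end InitialCylinders

section CylinderMeasure

variable {α : Type*} [Nonempty α]

theorem preimage_restrictFin_singleton {n : ℕ} (z : Fin n → α) :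
    restrictFin n ⁻¹' {z} =
      {x | ∀ k < n, x k = Function.extend Fin.val z (fun _ => Classical.arbitrary α) k} := by
  ext x
  simp only [Set.mem_preimage, Set.mem_singleton_iff, Set.mem_ofPred_eq, funext_iff, restrictFin]
  exact ⟨fun h k hk => (h ⟨k, hk⟩).trans (Fin.val_injective.extend_apply _ _ ⟨k, hk⟩).symm,
    fun h i => (h i i.isLt).trans (Fin.val_injective.extend_apply _ _ i)⟩

theorem measure_preimage_restrictFin [MeasurableSpace α] [MeasurableSingletonClass α]
    (μ : Measure (ℕ → α)) {w : α → ℕ → ℝ≥0∞}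
    (hμ : ∀ (n : ℕ) (y : ℕ → α), μ {x | ∀ k < n, x k = y k} = ∏ k ∈ range n, w (y k) k)
    {n : ℕ} (S : Finset (Fin n → α)) :
    μ (restrictFin n ⁻¹' S) = ∑ z ∈ S, ∏ i, w (z i) i := by
  rw [← sum_measure_preimage_singleton S
    fun z _ => measurable_restrictFin n (measurableSet_singleton z)]
  refine sum_congr rfl fun z _ => ?_
  rw [preimage_restrictFin_singleton, hμ,
    ← Fin.prod_univ_eq_prod_range (fun k => w (Function.extend Fin.val z _ k) k)]
  simp only [Fin.val_injective.extend_apply]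

end CylinderMeasure

section UniformReference

variable {α : Type*} [Fintype α] {p : α → ℕ → ℝ}

noncomputable def affinityWithUniform (p : α → ℕ → ℝ) (k : ℕ) : ℝ :=
  ∑ j, √(p j k / Fintype.card α)

noncomputable def uniformAfter (p : α → ℕ → ℝ) (m k : ℕ) (j : α) : ℝ :=
  if k < m then p j k else (Fintype.card α : ℝ)⁻¹

theorem sum_inv_card [Nonempty α] : ∑ _j : α, (Fintype.card α : ℝ)⁻¹ = 1 := by
  simp

theorem affinityWithUniform_nonneg (k : ℕ) : 0 ≤ affinityWithUniform p k :=
  sum_nonneg fun _ _ => Real.sqrt_nonneg _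

theorem affinityWithUniform_le_one [Nonempty α] (hp0 : ∀ j k, 0 ≤ p j k)
    (hp1 : ∀ k, ∑ j, p j k = 1) (k : ℕ) : affinityWithUniform p k ≤ 1 :=
  sum_sqrt_mul_le_one univ (fun j _ => hp0 j k) (fun _ _ => by positivity) (hp1 k) sum_inv_card

theorem uniformAfter_nonneg (hp0 : ∀ j k, 0 ≤ p j k) (m k : ℕ) (j : α) :
    0 ≤ uniformAfter p m k j := by
  unfold uniformAfter; split_ifs
  exacts [hp0 j k, by positivity]

theorem sum_uniformAfter [Nonempty α] (hp1 : ∀ k, ∑ j, p j k = 1) (m k : ℕ) :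
    ∑ j, uniformAfter p m k j = 1 := by
  unfold uniformAfter; split_ifs
  exacts [hp1 k, sum_inv_card]

theorem sum_sqrt_mul_uniformAfter (hp0 : ∀ j k, 0 ≤ p j k) (hp1 : ∀ k, ∑ j, p j k = 1)
    (m k : ℕ) : ∑ j, √(p j k * uniformAfter p m k j) =
      if k < m then 1 else affinityWithUniform p k := by
  unfold uniformAfter affinityWithUniform; split_ifs
  · simp only [Real.sqrt_mul_self (hp0 _ _), hp1]
  · simp only [div_eq_mul_inv]

theorem sqrt_sum_prod_le_sqrt_card_add_hellinger [Nonempty α] (hp0 : ∀ j k, 0 ≤ p j k)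
    (hp1 : ∀ k, ∑ j, p j k = 1)
    {m n : ℕ} (hmn : m ≤ n) (S : Finset (Fin n → α)) :
    √(∑ y ∈ S, ∏ i, p (y i) i) ≤ √((Fintype.card α : ℝ) ^ m * (#S * (Fintype.card α : ℝ)⁻¹ ^ n))
      + √(2 * (1 - ∏ k ∈ Ico m n, affinityWithUniform p k)) := by
  classical
  set s : ℝ := (Fintype.card α : ℝ)
  have hs : s ≠ 0 := Nat.cast_ne_zero.2 Fintype.card_ne_zero
  set ρ : (Fin n → α) → ℝ := fun y => ∏ i : Fin n, uniformAfter p m i (y i)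
  have hP0 : ∀ y : Fin n → α, 0 ≤ ∏ i, p (y i) i := fun y => prod_nonneg fun i _ => hp0 _ _
  have hρ0 : ∀ y, 0 ≤ ρ y := fun y => prod_nonneg fun i _ => uniformAfter_nonneg hp0 _ _ _
  have hρ_le : ∀ y, ρ y ≤ s⁻¹ ^ (n - m) := fun y => calc
    ρ y ≤ ∏ i : Fin n, (if (i : ℕ) < m then 1 else s⁻¹) := by
      refine prod_le_prod (fun i _ => uniformAfter_nonneg hp0 _ _ _) fun i _ => ?_
      unfold uniformAfter; split_ifs
      exacts [hp1 i ▸ single_le_sum (fun j _ => hp0 j i) (mem_univ _), le_rfl]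
    _ = s⁻¹ ^ (n - m) := by
      rw [prod_fin_ite_lt_eq_prod_Ico (fun _ => s⁻¹) hmn, prod_const, Nat.card_Ico]
  have hsum_ρ : ∑ y ∈ S, ρ y ≤ s ^ m * (#S * s⁻¹ ^ n) := by
    refine (sum_le_sum fun y _ => hρ_le y).trans_eq ?_
    rw [sum_const, nsmul_eq_mul, ← pow_mul_pow_sub s⁻¹ hmn, inv_pow s m]
    field_simp
  have hhellinger : ∑ y : Fin n → α, (√(∏ i, p (y i) i) - √(ρ y)) ^ 2
      = 2 * (1 - ∏ k ∈ Ico m n, affinityWithUniform p k) := by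
    rw [sum_sq_sqrt_sub_sqrt univ (fun y _ => hP0 y) (fun y _ => hρ0 y)
      (sum_prod_eq_one fun i : Fin n => hp1 i)
      (sum_prod_eq_one fun i : Fin n => sum_uniformAfter hp1 m i),
      sum_sqrt_prod_mul_prod (fun (i : Fin n) j => hp0 j i)
        (fun (i : Fin n) j => uniformAfter_nonneg hp0 m i j)]
    simp only [sum_sqrt_mul_uniformAfter hp0 hp1, prod_fin_ite_lt_eq_prod_Ico _ hmn]
  calc √(∑ y ∈ S, ∏ i, p (y i) i)
      ≤ √(∑ y ∈ S, ρ y) + √(∑ y ∈ S, (√(∏ i, p (y i) i) - √(ρ y)) ^ 2) :=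
        sqrt_sum_le_sqrt_sum_add_sqrt_sum_sq_sub S (fun y _ => hP0 y) (fun y _ => hρ0 y)
    _ ≤ _ := by
      gcongr
      exact hhellinger ▸ sum_le_sum_of_subset_of_nonneg (subset_univ S) fun _ _ _ => sq_nonneg _

theorem sqrt_measureReal_cylinder_le [Nonempty α] [MeasurableSpace α]
    [MeasurableSingletonClass α] (hp0 : ∀ j k, 0 ≤ p j k) (hp1 : ∀ k, ∑ j, p j k = 1)
    (μ ν : Measure (ℕ → α))
    (hμ : ∀ (n : ℕ) (y : ℕ → α),
      μ {x | ∀ k < n, x k = y k} = ∏ k ∈ range n, ENNReal.ofReal (p (y k) k))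
    (hν : ∀ (n : ℕ) (y : ℕ → α), ν {x | ∀ k < n, x k = y k} = (Fintype.card α : ℝ≥0∞)⁻¹ ^ n)
    {m n : ℕ} (hmn : m ≤ n) (S : Set (Fin n → α)) :
    √(μ.real (restrictFin n ⁻¹' S)) ≤ √((Fintype.card α : ℝ) ^ m * ν.real (restrictFin n ⁻¹' S))
      + √(2 * (1 - ∏ k ∈ Ico m n, affinityWithUniform p k)) := by
  set T := S.toFinite.toFinset
  have hS : restrictFin n ⁻¹' S = restrictFin n ⁻¹' T := by simp [T]
  have hμS : μ.real (restrictFin n ⁻¹' S) = ∑ y ∈ T, ∏ i, p (y i) i := by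
    rw [hS, measureReal_def, measure_preimage_restrictFin μ (w := fun j k => ENNReal.ofReal (p j k))
      hμ, ENNReal.toReal_sum fun _ _ => ENNReal.prod_ne_top fun _ _ => ENNReal.ofReal_ne_top]
    simp only [ENNReal.toReal_prod, ENNReal.toReal_ofReal (hp0 _ _)]
  have hνS : ν.real (restrictFin n ⁻¹' S) = #T * (Fintype.card α : ℝ)⁻¹ ^ n := by
    rw [hS, measureReal_def, measure_preimage_restrictFin ν
      (w := fun _ _ => (Fintype.card α : ℝ≥0∞)⁻¹) fun n y => by rw [hν, prod_const, card_range]]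
    simp
  rw [hμS, hνS]
  exact sqrt_sum_prod_le_sqrt_card_add_hellinger hp0 hp1 hmn T

end UniformReference

/-- Kakutani dichotomy consequence: for product measures on `Π k, Fin s` with
uniform reference measure, positivity of the infinite product of Hellinger
affinities implies absolute continuity `μ ≪ ν`. -/
theorem stmt7 (s : ℕ) (hs : 2 ≤ s)
    (p : Fin s → ℕ → ℝ) (hp0 : ∀ j k, 0 ≤ p j k) (hp1 : ∀ k, ∑ j : Fin s, p j k = 1)
    (μ ν : Measure ((k : ℕ) → Fin s))
    [IsProbabilityMeasure μ] [IsProbabilityMeasure ν]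
    (hμ : ∀ (n : ℕ) (y : (k : ℕ) → Fin s),
      μ {x | ∀ k < n, x k = y k} = ∏ k ∈ Finset.range n, ENNReal.ofReal (p (y k) k))
    (hν : ∀ (n : ℕ) (y : (k : ℕ) → Fin s),
      ν {x | ∀ k < n, x k = y k} = ∏ k ∈ Finset.range n, (1 / (s : ℝ≥0∞)))
    (c : ℝ) (hc : 0 < c)
    (hQ : Filter.Tendsto
      (fun N : ℕ => ∏ k ∈ Finset.range N, ∑ j : Fin s, Real.sqrt (p j k / s))
      Filter.atTop (nhds c)) :
    μ ≪ ν := by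
  have : Nonempty (Fin s) := ⟨⟨0, by omega⟩⟩
  have hν_card : ∀ (n : ℕ) (y : ℕ → Fin s),
      ν {x | ∀ k < n, x k = y k} = (Fintype.card (Fin s) : ℝ≥0∞)⁻¹ ^ n := by simpa using hν
  have hQ_affinity : Tendsto (fun N => ∏ k ∈ range N, affinityWithUniform p k) atTop (𝓝 c) := by
    simpa [affinityWithUniform] using hQ
  refine Measure.absolutelyContinuous_of_isSetAlgebra isSetAlgebra_initialCylinders
    generateFrom_initialCylinders μ ν fun η hη => ?_
  obtain ⟨m, hm⟩ := exists_forall_one_sub_le_prod_Ico affinityWithUniform_nonneg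
    (affinityWithUniform_le_one hp0 hp1) hc hQ_affinity (ε := η / 8) (by positivity)
  refine ⟨η / (4 * s ^ m), by positivity, fun B hB hνB => ?_⟩
  obtain ⟨n, hmn, S, rfl⟩ := exists_eq_preimage_restrictFin_of_le hB m
  have hν_small : (s : ℝ) ^ m * ν.real (restrictFin n ⁻¹' S) ≤ η / 4 := calc
    _ ≤ (s : ℝ) ^ m * (η / (4 * s ^ m)) := by gcongr
    _ = η / 4 := by field_simp
  have hsqrt : √(μ.real (restrictFin n ⁻¹' S)) ≤ √η := calc
    _ ≤ √((s : ℝ) ^ m * ν.real (restrictFin n ⁻¹' S)) +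
          √(2 * (1 - ∏ k ∈ Ico m n, affinityWithUniform p k)) := by
      simpa using sqrt_measureReal_cylinder_le hp0 hp1 μ ν hμ hν_card hmn S
    _ ≤ √(η / 4) + √(η / 4) := by gcongr; linarith [hm n hmn]
    _ = √η := by
      rw [Real.sqrt_div' _ (by norm_num : (0 : ℝ) ≤ 4), show (4 : ℝ) = 2 ^ 2 by norm_num,
        Real.sqrt_sq zero_le_two]
      ring
  exact (Real.sqrt_le_sqrt_iff hη.le).1 hsqrt
end

section
/- In the Kenyon setting, with d_{jn} forming a complete residue system modulo s for each n, uniform probabilities p_{jn} = 1/s, and ψ = Σ_k ψ_k s^{-k}, the CDF F_ψ satisfies F_ψ((r+1)/s^n) − F_ψ(r/s^n) ≤ 1/s^n for all integers r and all n ≥ 1 with (r)/s^n in the closure of the support. -/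
/-!
Split `ψ = S + T`, where `S = ∑_{k<n} ψ_k s^{-(k+1)}` is fixed by the first `n` digits and the tail
`T` is independent of them. Each digit string of length `n` has probability `s^{-n}`, and distinct
strings give values of `S` at distance at least `s^{-n}`: `s^n S` is an integer whose residue
mod `s` determines the last digit, since every column is a complete residue system. So, string by
string, `a ≤ ψ < a + s^{-n}` confines `T` to pairwise disjoint windows, and
`P(a ≤ ψ < a + s^{-n}) ≤ s^{-n} ∑_v P(T ∈ window_v) ≤ s^{-n}`.
-/

open MeasureTheory ProbabilityTheory
open scoped ENNReal

lemma disjoint_Ico_sub_of_le_abs_sub {x y a h : ℝ} (hxy : h ≤ |x - y|) :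
    Disjoint (Set.Ico (a - x) (a + h - x)) (Set.Ico (a - y) (a + h - y)) := by
  rw [Set.disjoint_left]
  rintro t ⟨hx₁, hx₂⟩ ⟨hy₁, hy₂⟩
  cases abs_cases (x - y) <;> linarith

theorem measure_Ico_le_of_indep_add {Ω ι : Type*} [m : MeasurableSpace Ω] [Fintype ι]
    {μ : Measure Ω} [IsProbabilityMeasure μ] {mA mB : MeasurableSpace Ω} (hmB : mB ≤ m)
    (hind : Indep mA mB μ) {A : ι → Set Ω} (hA : ∀ i, MeasurableSet[mA] (A i))
    {p : ℝ≥0∞} (hAp : ∀ i, μ (A i) ≤ p) {c : ι → ℝ} {h : ℝ}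
    (hc : Pairwise fun i j => h ≤ |c i - c j|) {T : Ω → ℝ} (hT : Measurable[mB] T)
    {X : Ω → ℝ} (hX : ∀ ω, ∃ i, ω ∈ A i ∧ X ω = c i + T ω) (a : ℝ) :
    μ {ω | X ω ∈ Set.Ico a (a + h)} ≤ p := by
  set B : ι → Set Ω := fun i => T ⁻¹' Set.Ico (a - c i) (a + h - c i)
  have hB : ∀ i, MeasurableSet[mB] (B i) := fun i => hT measurableSet_Ico
  have hBdisj : Pairwise (Function.onFun Disjoint B) := fun i j hij =>
    (disjoint_Ico_sub_of_le_abs_sub (hc hij)).preimage T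
  have hcover : {ω | X ω ∈ Set.Ico a (a + h)} ⊆ ⋃ i, A i ∩ B i := by
    rintro ω ⟨hω₁, hω₂⟩
    obtain ⟨i, hi, hXi⟩ := hX ω
    exact Set.mem_iUnion.2 ⟨i, hi, by constructor <;> linarith⟩
  calc μ {ω | X ω ∈ Set.Ico a (a + h)}
      ≤ ∑ i, μ (A i ∩ B i) := (measure_mono hcover).trans (measure_iUnion_fintype_le _ _)
    _ = ∑ i, μ (A i) * μ (B i) :=
        Finset.sum_congr rfl fun i _ => (Indep_iff _ _ _).1 hind _ _ (hA i) (hB i)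
    _ ≤ ∑ i, p * μ (B i) := by gcongr with i; exact hAp i
    _ = p * μ (⋃ i, B i) := by
        rw [← Finset.mul_sum, measure_iUnion hBdisj fun i => hmB _ (hB i), tsum_fintype]
    _ ≤ p := mul_le_of_le_one_right' prob_le_one

lemma sub_toReal_measure_lt_le {Ω : Type*} [MeasurableSpace Ω] (μ : Measure Ω)
    [IsFiniteMeasure μ] (X : Ω → ℝ) {a b : ℝ} :
    (μ {ω | X ω < b}).toReal - (μ {ω | X ω < a}).toReal
      ≤ (μ {ω | X ω ∈ Set.Ico a b}).toReal := by
  have hsub : {ω | X ω < b} ⊆ {ω | X ω < a} ∪ {ω | X ω ∈ Set.Ico a b} := fun ω hω => by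
    by_cases ha : X ω < a
    · exact Or.inl ha
    · exact Or.inr ⟨le_of_not_gt ha, hω⟩
  have := (measureReal_mono (μ := μ) hsub).trans (measureReal_union_le _ _)
  simp only [measureReal_def] at this
  linarith

lemma summable_div_pow_of_mem_Icc {f : ℕ → ℝ} {b L : ℝ} (hb : 1 < b)
    (hf : ∀ k, f k ∈ Set.Icc 0 L) : Summable fun k => f k / b ^ (k + 1) := by
  have hb0 : 0 < b := by linarith
  refine Summable.of_nonneg_of_le (fun k => div_nonneg (hf k).1 (by positivity)) (fun k => ?_)
    ((summable_geometric_of_lt_one (inv_nonneg.2 hb0.le) (inv_lt_one_of_one_lt₀ hb)).mul_left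
      (L / b))
  calc f k / b ^ (k + 1) ≤ L / b ^ (k + 1) := by gcongr; exact (hf k).2
    _ = L / b * b⁻¹ ^ k := by rw [inv_pow, pow_succ']; field_simp

section Digits

variable {s : ℕ} (d : Fin s → ℕ → ℤ)

def prefixInt : (n : ℕ) → (Fin n → Fin s) → ℤ
  | 0, _ => 0
  | n + 1, v => s * prefixInt n (Fin.init v) + d (v (Fin.last n)) (n + 1)

noncomputable def prefixSum (n : ℕ) (v : Fin n → Fin s) : ℝ :=
  ∑ k : Fin n, (d (v k) (k + 1) : ℝ) / (s : ℝ) ^ ((k : ℕ) + 1)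

lemma prefixInt_eq (n : ℕ) (v : Fin n → Fin s) :
    (prefixInt d n v : ℝ) = (s : ℝ) ^ n * prefixSum d n v := by
  induction n with
  | zero => simp [prefixInt, prefixSum]
  | succ n ih =>
    have hs : (s : ℝ) ≠ 0 := Nat.cast_ne_zero.2 (v 0).pos.ne'
    rw [prefixInt, prefixSum, Fin.sum_univ_castSucc]
    push_cast
    rw [ih, prefixSum]
    field_simp
    simp only [Fin.init, Fin.val_castSucc]
    ring

lemma prefixInt_injective (hres : ∀ m, Function.Injective fun j : Fin s => (d j m : ZMod s))
    (n : ℕ) : Function.Injective (prefixInt d n) := by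
  induction n with
  | zero => exact fun v w _ => funext fun k => k.elim0
  | succ n ih =>
    intro v w h
    have hmod : ∀ u : Fin (n + 1) → Fin s,
        (prefixInt d (n + 1) u : ZMod s) = d (u (Fin.last n)) (n + 1) := fun u => by
      simp [prefixInt]
    have hlast : v (Fin.last n) = w (Fin.last n) := hres (n + 1) <| by
      simpa only [hmod] using congrArg (fun z : ℤ => (z : ZMod s)) h
    have hinit : Fin.init v = Fin.init w := by
      apply ih
      simp only [prefixInt, hlast, add_left_inj] at h
      exact mul_left_cancel₀ (Int.natCast_ne_zero.2 (v 0).pos.ne') h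
    rw [← Fin.snoc_init_self v, ← Fin.snoc_init_self w, hinit, hlast]

lemma one_div_pow_le_abs_prefixSum_sub
    (hres : ∀ m, Function.Injective fun j : Fin s => (d j m : ZMod s)) {n : ℕ}
    {v w : Fin n → Fin s} (hvw : v ≠ w) :
    1 / (s : ℝ) ^ n ≤ |prefixSum d n v - prefixSum d n w| := by
  obtain ⟨k, -⟩ := Function.ne_iff.1 hvw
  have hs : (0 : ℝ) < (s : ℝ) ^ n := pow_pos (Nat.cast_pos.2 (v k).pos) n
  have hint : (1 : ℝ) ≤ |(prefixInt d n v : ℝ) - prefixInt d n w| := by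
    exact_mod_cast Int.one_le_abs (sub_ne_zero.2 ((prefixInt_injective d hres n).ne hvw))
  rw [prefixInt_eq, prefixInt_eq, ← mul_sub, abs_mul, abs_of_pos hs] at hint
  rwa [div_le_iff₀' hs]

lemma tsum_div_pow_eq_prefixSum_add {x : ℕ → ℝ}
    (hx : Summable fun k => x k / (s : ℝ) ^ (k + 1)) {n : ℕ} {v : Fin n → Fin s}
    (hv : ∀ i : Fin n, x i = d (v i) (i + 1)) :
    ∑' k, x k / (s : ℝ) ^ (k + 1)
      = prefixSum d n v + ∑' k, x (k + n) / (s : ℝ) ^ (k + n + 1) := by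
  rw [← hx.sum_add_tsum_nat_add n, prefixSum, Finset.sum_range]
  simp only [hv]

end Digits

lemma measurable_of_mem_biSup_comap {Ω β : Type*} [MeasurableSpace β] (X : ℕ → Ω → β)
    {t : Set ℕ} {i : ℕ} (hi : i ∈ t) :
    Measurable[⨆ j ∈ t, MeasurableSpace.comap (X j) inferInstance] (X i) :=
  measurable_iff_comap_le.2
    (le_iSup₂ (f := fun j (_ : j ∈ t) => MeasurableSpace.comap (X j) inferInstance) i hi)

lemma measurableSet_iInter_preimage_singleton {Ω β : Type*} [MeasurableSpace β]
    [MeasurableSingletonClass β] (X : ℕ → Ω → β) {n : ℕ} (c : Fin n → β) :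
    MeasurableSet[⨆ j ∈ Set.Iio n, MeasurableSpace.comap (X j) inferInstance]
      (⋂ i : Fin n, X i ⁻¹' {c i}) :=
  MeasurableSet.iInter fun i =>
    measurable_of_mem_biSup_comap X (Set.mem_Iio.2 i.isLt) (measurableSet_singleton _)

lemma measure_iInter_preimage_singleton {Ω β : Type*} [MeasurableSpace Ω] [MeasurableSpace β]
    [MeasurableSingletonClass β] {X : ℕ → Ω → β} {μ : Measure Ω} (hX : iIndepFun X μ) {n : ℕ}
    (c : Fin n → β) {p : ℝ≥0∞} (hp : ∀ i : Fin n, μ (X i ⁻¹' {c i}) = p) :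
    μ (⋂ i : Fin n, X i ⁻¹' {c i}) = p ^ n := by
  rw [(hX.precomp Fin.val_injective).meas_iInter
    fun i => ⟨{c i}, measurableSet_singleton _, rfl⟩]
  simp [hp]

lemma measurable_tsum_tail {Ω : Type*} (Y : ℕ → Ω → ℝ) (n : ℕ) (b : ℝ) :
    Measurable[⨆ j ∈ (Set.Iio n)ᶜ, MeasurableSpace.comap (Y j) inferInstance]
      fun ω => ∑' k, Y (k + n) ω / b ^ (k + n + 1) := by
  let := ⨆ j ∈ (Set.Iio n)ᶜ, MeasurableSpace.comap (Y j) inferInstance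
  exact Measurable.tsum fun k =>
    (measurable_of_mem_biSup_comap Y (by simp : k + n ∈ (Set.Iio n)ᶜ)).div_const _

/-- Kenyon setting: the CDF of `ψ` increases by at most `1/s^n` on dyadic-type
intervals `[r/s^n, (r+1)/s^n]` with left endpoint in the set of subsums `M`. -/
theorem stmt15 {Ω : Type*} [MeasureSpace Ω] [IsProbabilityMeasure (ℙ : Measure Ω)]
    (s : ℕ) (hs : 2 ≤ s) (L : ℝ)
    (d : Fin s → ℕ → ℤ)
    (hres : ∀ n : ℕ, Function.Bijective (fun j : Fin s => (d j n : ZMod s)))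
    (hmono : ∀ n : ℕ, StrictMono (fun j : Fin s => d j n))
    (hzero : ∀ n : ℕ, d ⟨0, by omega⟩ n = 0)
    (hbd : ∀ (j : Fin s) (n : ℕ), (d j n : ℝ) ≤ L)
    (ψk : ℕ → Ω → ℝ) (hmeas : ∀ k, Measurable (ψk k))
    (hindep : iIndepFun ψk (ℙ : Measure Ω))
    (hval : ∀ (j : Fin s) (k : ℕ),
      (ℙ : Measure Ω) {ω | ψk k ω = (d j (k + 1) : ℝ)} = 1 / s)
    (hrange : ∀ (k : ℕ) (ω : Ω), ∃ j : Fin s, ψk k ω = (d j (k + 1) : ℝ))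
    (ψ : Ω → ℝ) (hψ : ∀ ω, ψ ω = ∑' k : ℕ, ψk k ω / (s : ℝ) ^ (k + 1))
    (F : ℝ → ℝ) (hF : ∀ x, F x = ((ℙ : Measure Ω) {ω | ψ ω < x}).toReal)
    (M : Set ℝ) :
    ∀ (r : ℤ) (n : ℕ), 1 ≤ n → ((r : ℝ) / (s : ℝ) ^ n) ∈ M →
      F (((r : ℝ) + 1) / (s : ℝ) ^ n) - F ((r : ℝ) / (s : ℝ) ^ n) ≤ 1 / (s : ℝ) ^ n := by
  intro r n _ _
  have hdigit : ∀ k ω, ψk k ω ∈ Set.Icc 0 L := fun k ω => by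
    obtain ⟨j, hj⟩ := hrange k ω
    have h0 := (hmono (k + 1)).monotone (show ⟨0, by omega⟩ ≤ j from Nat.zero_le _)
    rw [hj]
    exact ⟨by exact_mod_cast (hzero (k + 1)) ▸ h0, hbd j _⟩
  have hsplit : ∀ ω, ∃ v : Fin n → Fin s,
      ω ∈ ⋂ i : Fin n, ψk i ⁻¹' {(d (v i) (i + 1) : ℝ)} ∧
        ψ ω = prefixSum d n v + ∑' k, ψk (k + n) ω / (s : ℝ) ^ (k + n + 1) := fun ω => by
    choose v hv using fun i : Fin n => hrange i ω
    refine ⟨v, Set.mem_iInter.2 hv, ?_⟩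
    rw [hψ, tsum_div_pow_eq_prefixSum_add d
      (summable_div_pow_of_mem_Icc (by exact_mod_cast hs) (hdigit · ω)) hv]
  have hwindow := measure_Ico_le_of_indep_add (μ := ℙ)
    (iSup₂_le fun i _ => (hmeas i).comap_le)
    (indep_biSup_compl (fun i => (hmeas i).comap_le) hindep.iIndep (Set.Iio n))
    (fun v => measurableSet_iInter_preimage_singleton ψk _)
    (fun v => (measure_iInter_preimage_singleton hindep _ fun i => hval _ _).le)
    (fun v w hvw => one_div_pow_le_abs_prefixSum_sub d (fun m => (hres m).injective) hvw)
    (measurable_tsum_tail ψk n s) hsplit ((r : ℝ) / (s : ℝ) ^ n)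
  rw [hF, hF, add_div]
  calc _ ≤ _ := sub_toReal_measure_lt_le ℙ ψ
    _ ≤ ((1 / (s : ℝ≥0∞)) ^ n).toReal := ENNReal.toReal_mono
        (ENNReal.pow_ne_top (ENNReal.div_ne_top ENNReal.one_ne_top (Nat.cast_ne_zero.2 (by omega))))
        hwindow
    _ = 1 / (s : ℝ) ^ n := by simp
end
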